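/- arXiv:2405.19532 — 6 statements merged into one kernel-verified Lean document; each statement's English description precedes it below -/
import Mathlib

section
/- (Danskin-type differentiability, second part of Proposition 3.1.) For ε > 0, the function C ↦ OT_{k,ε}(C) is differentiable at every cost tensor C, and its gradient with respect to the standard inner product on k-marginal tensors equals the unique optimal polystochastic tensor P_ε(C); i.e., for every tensor H, the directional derivative of OT_{k,ε} at C in direction H equals Σ_σ P_ε(C)(σ)·H(σ). -/
open Finset Real

/-- The ℓ-th marginal of a k-marginal tensor `P : (Fin k → Fin n) → ℝ`. -/
def marginal (n k : ℕ) (P : (Fin k → Fin n) → ℝ) (ℓ : Fin k) (i : Fin n) : ℝ :=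
  ∑ σ ∈ Finset.univ.filter (fun σ : Fin k → Fin n => σ ℓ = i), P σ

/-- The polystochastic polytope `B_{n,k}`. -/
def Bpoly (n k : ℕ) : Set ((Fin k → Fin n) → ℝ) :=
  {P | (∀ σ, 0 ≤ P σ) ∧ ∀ (ℓ : Fin k) (i : Fin n), marginal n k P ℓ i = 1 / (n : ℝ)}

/-- The scaled identity (ground-truth) tensor `J_{n,k}`. -/
noncomputable def Jtensor (n k : ℕ) : (Fin k → Fin n) → ℝ :=
  fun σ => if ∀ ℓ ℓ' : Fin k, σ ℓ = σ ℓ' then 1 / (n : ℝ) else 0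

/-- The entropic objective `h_{k,ε}(P, C)` (in Lean `Real.log 0 = 0`, so the
convention `0 * (log 0 - 1) = 0` holds automatically). -/
noncomputable def hObj (n k : ℕ) (ε : ℝ) (P C : (Fin k → Fin n) → ℝ) : ℝ :=
  ∑ σ : Fin k → Fin n, P σ * C σ + ε * ∑ σ : Fin k → Fin n, P σ * (Real.log (P σ) - 1)

/-- `OT_{k,ε}(C)`, the minimum of `h_{k,ε}(·, C)` over `B_{n,k}`. -/
noncomputable def OTval (n k : ℕ) (ε : ℝ) (C : (Fin k → Fin n) → ℝ) : ℝ :=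
  sInf ((fun P => hObj n k ε P C) '' Bpoly n k)


lemma Bpoly_entry_le {n k : ℕ} (hk : 1 ≤ k) {P : (Fin k → Fin n) → ℝ}
    (hP : P ∈ Bpoly n k) (σ : Fin k → Fin n) : P σ ≤ 1 / (n : ℝ) := by
  obtain ⟨hpos, hmarg⟩ := hP
  rw [← hmarg ⟨0, hk⟩ (σ ⟨0, hk⟩)]
  exact Finset.single_le_sum (fun τ _ => hpos τ) (by simp)

lemma Bpoly_entry_le_one {n k : ℕ} (hn : 1 ≤ n) (hk : 1 ≤ k) {P : (Fin k → Fin n) → ℝ}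
    (hP : P ∈ Bpoly n k) (σ : Fin k → Fin n) : P σ ≤ 1 := by
  refine (Bpoly_entry_le hk hP σ).trans ?_
  rw [div_le_one (by exact_mod_cast Nat.lt_of_lt_of_le Nat.zero_lt_one hn)]
  exact_mod_cast hn

lemma Bpoly_midpoint {n k : ℕ} {P Q : (Fin k → Fin n) → ℝ}
    (hP : P ∈ Bpoly n k) (hQ : Q ∈ Bpoly n k) :
    (fun σ => (P σ + Q σ) / 2) ∈ Bpoly n k := by
  refine ⟨fun σ => by have := hP.1 σ; have := hQ.1 σ; positivity, fun ℓ i => ?_⟩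
  have hm : marginal n k (fun σ => (P σ + Q σ) / 2) ℓ i
      = (marginal n k P ℓ i + marginal n k Q ℓ i) / 2 := by
    unfold marginal
    rw [← Finset.sum_add_distrib, ← Finset.sum_div]
  rw [hm, hP.2 ℓ i, hQ.2 ℓ i]
  ring

lemma Bpoly_isClosed (n k : ℕ) : IsClosed (Bpoly n k) := by
  have : Bpoly n k = (⋂ σ : Fin k → Fin n, {P : (Fin k → Fin n) → ℝ | 0 ≤ P σ}) ∩
      ⋂ ℓ : Fin k, ⋂ i : Fin n, {P | marginal n k P ℓ i = 1 / (n : ℝ)} := by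
    ext P
    simp only [Bpoly, Set.mem_setOf_eq, Set.mem_inter_iff, Set.mem_iInter]
  rw [this]
  refine IsClosed.inter (isClosed_iInter fun σ =>
    isClosed_le continuous_const (continuous_apply σ)) ?_
  refine isClosed_iInter fun ℓ => isClosed_iInter fun i => isClosed_eq ?_ continuous_const
  exact continuous_finset_sum _ fun τ _ => continuous_apply τ

lemma Bpoly_isCompact (n k : ℕ) (hn : 1 ≤ n) (hk : 1 ≤ k) : IsCompact (Bpoly n k) := by
  refine IsCompact.of_isClosed_subset (isCompact_Icc
    (a := fun _ : Fin k → Fin n => (0:ℝ)) (b := fun _ => 1)) (Bpoly_isClosed n k) ?_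
  intro P hP
  exact ⟨fun σ => hP.1 σ, fun σ => Bpoly_entry_le_one hn hk hP σ⟩

lemma hObj_continuous (n k : ℕ) (ε : ℝ) (C : (Fin k → Fin n) → ℝ) :
    Continuous fun P => hObj n k ε P C := by
  unfold hObj
  refine Continuous.add (continuous_finset_sum _ fun σ _ =>
    (continuous_apply σ).mul continuous_const) (continuous_const.mul ?_)
  have : ∀ P : (Fin k → Fin n) → ℝ, ∀ σ, P σ * (Real.log (P σ) - 1)
      = P σ * Real.log (P σ) - P σ := fun P σ => by ring
  simp only [this]
  exact continuous_finset_sum _ fun σ _ =>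
    (Real.continuous_mul_log.comp (continuous_apply σ)).sub (continuous_apply σ)

lemma OTval_attained (n k : ℕ) (hn : 1 ≤ n) (hk : 1 ≤ k) (ε : ℝ)
    (C' : (Fin k → Fin n) → ℝ) (hne : (Bpoly n k).Nonempty) :
    ∃ Q ∈ Bpoly n k, (∀ R ∈ Bpoly n k, hObj n k ε Q C' ≤ hObj n k ε R C') ∧
      OTval n k ε C' = hObj n k ε Q C' := by
  obtain ⟨Q, hQmem, hQ⟩ := (Bpoly_isCompact n k hn hk).exists_isMinOn hne
    (hObj_continuous n k ε C').continuousOn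
  refine ⟨Q, hQmem, fun R hR => hQ hR, le_antisymm ?_ ?_⟩
  · exact csInf_le ⟨hObj n k ε Q C', by rintro _ ⟨R, hR, rfl⟩; exact hQ hR⟩ ⟨Q, hQmem, rfl⟩
  · exact le_csInf (hne.image _) (by rintro _ ⟨R, hR, rfl⟩; exact hQ hR)

lemma hObj_add (n k : ℕ) (ε : ℝ) (Q C H : (Fin k → Fin n) → ℝ) :
    hObj n k ε Q (C + H) = hObj n k ε Q C + ∑ σ : Fin k → Fin n, Q σ * H σ := by
  unfold hObj
  simp only [Pi.add_apply, mul_add, Finset.sum_add_distrib]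
  ring

lemma gConvex : ConvexOn ℝ (Set.Icc (0:ℝ) 1) (fun t => t * Real.log t - t^2/2) := by
  have hInt : interior (Set.Icc (0:ℝ) 1) = Set.Ioo 0 1 := interior_Icc
  refine convexOn_of_hasDerivWithinAt2_nonneg (f' := fun t => Real.log t + 1 - t)
    (f'' := fun t => t⁻¹ - 1) (convex_Icc 0 1)
    ((Real.continuous_mul_log.sub ((continuous_pow 2).div_const 2)).continuousOn) ?_ ?_ ?_
  · intro x hx
    rw [hInt] at hx
    have h1 : HasDerivAt (fun t : ℝ => t * Real.log t - t^2/2) (Real.log x + 1 - x) x := by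
      have := (Real.hasDerivAt_mul_log hx.1.ne').sub ((hasDerivAt_pow 2 x).div_const 2)
      refine this.congr_deriv ?_
      push_cast
      ring
    exact h1.hasDerivWithinAt
  · intro x hx
    rw [hInt] at hx
    have h2 : HasDerivAt (fun t : ℝ => Real.log t + 1 - t) (x⁻¹ - 1) x := by
      have := ((Real.hasDerivAt_log hx.1.ne').add_const 1).sub (hasDerivAt_id x)
      exact this
    exact h2.hasDerivWithinAt
  · intro x hx
    rw [hInt] at hx
    have : 1 ≤ x⁻¹ := (one_le_inv₀ hx.1).2 hx.2.le
    linarith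

lemma entropy_midpoint {x y : ℝ} (hx0 : 0 ≤ x) (hx1 : x ≤ 1) (hy0 : 0 ≤ y) (hy1 : y ≤ 1) :
    ((x+y)/2) * (Real.log ((x+y)/2) - 1)
      ≤ (x * (Real.log x - 1) + y * (Real.log y - 1))/2 - (x-y)^2/8 := by
  have h := gConvex.2 (Set.mem_Icc.2 ⟨hx0, hx1⟩) (Set.mem_Icc.2 ⟨hy0, hy1⟩)
    (by norm_num : (0:ℝ) ≤ 1/2) (by norm_num : (0:ℝ) ≤ 1/2) (by norm_num)
  simp only [smul_eq_mul] at h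
  have he : (1/2:ℝ) * x + (1/2) * y = (x+y)/2 := by ring
  rw [he] at h
  nlinarith [h]
lemma hObj_strong {n k : ℕ} (hn : 1 ≤ n) (hk : 1 ≤ k) {ε : ℝ} (hε : 0 < ε)
    {P Q : (Fin k → Fin n) → ℝ} (hP : P ∈ Bpoly n k) (hQ : Q ∈ Bpoly n k)
    (C : (Fin k → Fin n) → ℝ) :
    hObj n k ε (fun σ => (P σ + Q σ) / 2) C
      ≤ (hObj n k ε P C + hObj n k ε Q C) / 2
        - (ε / 8) * ∑ σ : Fin k → Fin n, (P σ - Q σ)^2 := by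
  have hlin : ∑ σ : Fin k → Fin n, ((P σ + Q σ) / 2) * C σ
      = (∑ σ : Fin k → Fin n, P σ * C σ + ∑ σ : Fin k → Fin n, Q σ * C σ) / 2 := by
    rw [← Finset.sum_add_distrib, Finset.sum_div]
    exact Finset.sum_congr rfl fun σ _ => by ring
  have hent : ∑ σ : Fin k → Fin n, ((P σ + Q σ) / 2) * (Real.log ((P σ + Q σ) / 2) - 1)
      ≤ (∑ σ : Fin k → Fin n, P σ * (Real.log (P σ) - 1)
          + ∑ σ : Fin k → Fin n, Q σ * (Real.log (Q σ) - 1)) / 2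
        - (1 / 8) * ∑ σ : Fin k → Fin n, (P σ - Q σ)^2 := by
    have h1 : ∀ σ : Fin k → Fin n, ((P σ + Q σ) / 2) * (Real.log ((P σ + Q σ) / 2) - 1)
        ≤ (P σ * (Real.log (P σ) - 1) + Q σ * (Real.log (Q σ) - 1)) / 2 - (P σ - Q σ)^2 / 8 :=
      fun σ => entropy_midpoint (hP.1 σ) (Bpoly_entry_le_one hn hk hP σ)
        (hQ.1 σ) (Bpoly_entry_le_one hn hk hQ σ)
    calc ∑ σ : Fin k → Fin n, ((P σ + Q σ) / 2) * (Real.log ((P σ + Q σ) / 2) - 1)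
        ≤ ∑ σ : Fin k → Fin n,
            ((P σ * (Real.log (P σ) - 1) + Q σ * (Real.log (Q σ) - 1)) / 2
              - (P σ - Q σ)^2 / 8) := Finset.sum_le_sum fun σ _ => h1 σ
      _ = (∑ σ : Fin k → Fin n, P σ * (Real.log (P σ) - 1)
            + ∑ σ : Fin k → Fin n, Q σ * (Real.log (Q σ) - 1)) / 2
          - (1 / 8) * ∑ σ : Fin k → Fin n, (P σ - Q σ)^2 := by
        have h2 : ∑ σ : Fin k → Fin n,
            (P σ * (Real.log (P σ) - 1) + Q σ * (Real.log (Q σ) - 1)) / 2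
            = (∑ σ : Fin k → Fin n, P σ * (Real.log (P σ) - 1)
                + ∑ σ : Fin k → Fin n, Q σ * (Real.log (Q σ) - 1)) / 2 := by
          rw [← Finset.sum_div, Finset.sum_add_distrib]
        have h3 : ∑ σ : Fin k → Fin n, (P σ - Q σ)^2 / 8
            = (1 / 8) * ∑ σ : Fin k → Fin n, (P σ - Q σ)^2 := by
          rw [Finset.mul_sum]
          exact Finset.sum_congr rfl fun σ _ => by ring
        rw [Finset.sum_sub_distrib, h2, h3]
  unfold hObj
  have := mul_le_mul_of_nonneg_left hent hε.le
  rw [hlin]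
  nlinarith [this]
theorem OTval_hasFDerivAt (n k : ℕ) (hn : 1 ≤ n) (hk : 1 ≤ k) (ε : ℝ) (hε : 0 < ε)
    (C : (Fin k → Fin n) → ℝ) (P : (Fin k → Fin n) → ℝ)
    (hPmem : P ∈ Bpoly n k)
    (hPmin : ∀ Q ∈ Bpoly n k, hObj n k ε P C ≤ hObj n k ε Q C)
    (hPuniq : ∀ Q, (Q ∈ Bpoly n k ∧ ∀ R ∈ Bpoly n k, hObj n k ε Q C ≤ hObj n k ε R C) → Q = P) :
    HasFDerivAt (fun C' : (Fin k → Fin n) → ℝ => OTval n k ε C')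
      (∑ σ : Fin k → Fin n,
        P σ • (ContinuousLinearMap.proj σ : ((Fin k → Fin n) → ℝ) →L[ℝ] ℝ)) C ∧
    ∀ H : (Fin k → Fin n) → ℝ,
      (∑ σ : Fin k → Fin n,
        P σ • (ContinuousLinearMap.proj σ : ((Fin k → Fin n) → ℝ) →L[ℝ] ℝ)) H
        = ∑ σ : Fin k → Fin n, P σ * H σ := by
  have hLapp : ∀ H : (Fin k → Fin n) → ℝ,
      (∑ σ : Fin k → Fin n,
        P σ • (ContinuousLinearMap.proj σ : ((Fin k → Fin n) → ℝ) →L[ℝ] ℝ)) H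
        = ∑ σ : Fin k → Fin n, P σ * H σ := by
    intro H
    simp [ContinuousLinearMap.sum_apply, ContinuousLinearMap.smul_apply,
      ContinuousLinearMap.proj_apply, smul_eq_mul]
  refine ⟨?_, hLapp⟩
  have hOTC : OTval n k ε C = hObj n k ε P C := le_antisymm
    (csInf_le ⟨hObj n k ε P C, by rintro _ ⟨R, hR, rfl⟩; exact hPmin R hR⟩ ⟨P, hPmem, rfl⟩)
    (le_csInf ⟨_, ⟨P, hPmem, rfl⟩⟩ (by rintro _ ⟨R, hR, rfl⟩; exact hPmin R hR))
  set N : ℝ := (Fintype.card (Fin k → Fin n) : ℝ) with hN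
  have hN0 : 0 ≤ N := by positivity
  have key : ∀ H : (Fin k → Fin n) → ℝ,
      |OTval n k ε (C + H) - OTval n k ε C - ∑ σ : Fin k → Fin n, P σ * H σ|
        ≤ 4 / ε * N * ‖H‖^2 := by
    intro H
    obtain ⟨Q, hQmem, hQmin, hOTQ⟩ := OTval_attained n k hn hk ε (C + H) ⟨P, hPmem⟩
    set S := ∑ σ : Fin k → Fin n, (P σ - Q σ)^2 with hS
    set T := ∑ σ : Fin k → Fin n, (H σ)^2 with hT
    set a := ∑ σ : Fin k → Fin n, (P σ - Q σ) * H σ with ha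
    have hS0 : 0 ≤ S := Finset.sum_nonneg fun σ _ => sq_nonneg _
    have hT0 : 0 ≤ T := Finset.sum_nonneg fun σ _ => sq_nonneg _
    have h2 : a = ∑ σ : Fin k → Fin n, P σ * H σ - ∑ σ : Fin k → Fin n, Q σ * H σ := by
      rw [ha, ← Finset.sum_sub_distrib]
      exact Finset.sum_congr rfl fun σ _ => by ring
    have hdiff0 : 0 ≤ hObj n k ε Q C - hObj n k ε P C := sub_nonneg.2 (hPmin Q hQmem)
    have hup : hObj n k ε Q C - hObj n k ε P C ≤ a := by
      have h1 := hQmin P hPmem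
      rw [hObj_add, hObj_add] at h1
      linarith
    have hstrong : ε / 4 * S ≤ hObj n k ε Q C - hObj n k ε P C := by
      have hM := hPmin _ (Bpoly_midpoint hPmem hQmem)
      have hM2 := hObj_strong hn hk hε hPmem hQmem C
      linarith
    have hCS : a^2 ≤ S * T := by
      rw [ha, hS, hT]
      exact Finset.sum_mul_sq_le_sq_mul_sq _ _ _
    have haT : a ≤ 4 / ε * T := by
      rcases le_or_gt a 0 with h | h
      · exact h.trans (by positivity)
      · have hSa : S ≤ 4 / ε * a := by
          have h3 := mul_le_mul_of_nonneg_left (hstrong.trans hup)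
            (le_of_lt (by positivity : (0:ℝ) < 4 / ε))
          calc S = 4 / ε * (ε / 4 * S) := by field_simp
            _ ≤ 4 / ε * a := h3
        have h4 : a * a ≤ (4 / ε * T) * a := by
          calc a * a = a^2 := (sq a).symm
            _ ≤ S * T := hCS
            _ ≤ (4 / ε * a) * T := mul_le_mul_of_nonneg_right hSa hT0
            _ = (4 / ε * T) * a := by ring
        exact le_of_mul_le_mul_right h4 h
    have hrep : OTval n k ε (C + H) - OTval n k ε C - ∑ σ : Fin k → Fin n, P σ * H σ
        = (hObj n k ε Q C - hObj n k ε P C) - a := by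
      rw [hOTQ, hOTC, hObj_add, h2]
      ring
    have hTbound : T ≤ N * ‖H‖^2 := by
      rw [hT, hN]
      calc ∑ σ : Fin k → Fin n, (H σ)^2 ≤ ∑ _σ : Fin k → Fin n, ‖H‖^2 := by
            refine Finset.sum_le_sum fun σ _ => ?_
            have h1 : |H σ| ≤ ‖H‖ := by
              rw [← Real.norm_eq_abs]; exact norm_le_pi_norm H σ
            calc (H σ)^2 = |H σ|^2 := (sq_abs _).symm
              _ ≤ ‖H‖^2 := pow_le_pow_left₀ (abs_nonneg _) h1 2
        _ = (Fintype.card (Fin k → Fin n) : ℝ) * ‖H‖^2 := by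
            rw [Finset.sum_const, Finset.card_univ, nsmul_eq_mul]
    have hb0 : 0 ≤ 4 / ε * N * ‖H‖^2 := by positivity
    have hge : a ≤ 4 / ε * (N * ‖H‖^2) := haT.trans
      (mul_le_mul_of_nonneg_left hTbound (by positivity))
    rw [hrep, abs_le]
    constructor
    · nlinarith
    · linarith
  rw [hasFDerivAt_iff_isLittleO_nhds_zero, Asymptotics.isLittleO_iff]
  intro c hc
  rw [Metric.eventually_nhds_iff]
  have hK0 : 0 ≤ 4 / ε * N := by positivity
  refine ⟨c / (4 / ε * N + 1), by positivity, fun H hH => ?_⟩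
  rw [dist_zero_right] at hH
  have hH' : ‖H‖ * (4 / ε * N + 1) < c := (lt_div_iff₀ (by positivity)).1 hH
  calc ‖OTval n k ε (C + H) - OTval n k ε C -
        (∑ σ : Fin k → Fin n,
          P σ • (ContinuousLinearMap.proj σ : ((Fin k → Fin n) → ℝ) →L[ℝ] ℝ)) H‖
      = |OTval n k ε (C + H) - OTval n k ε C - ∑ σ : Fin k → Fin n, P σ * H σ| := by
        rw [hLapp H, Real.norm_eq_abs]
    _ ≤ 4 / ε * N * ‖H‖^2 := key H
    _ ≤ c * ‖H‖ := by nlinarith [norm_nonneg H, sq_nonneg ‖H‖,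
        mul_le_mul_of_nonneg_left hH'.le (norm_nonneg H)]
end

section
/- (Strong duality for entropic multi-marginal OT, equation (8).) For every ε > 0 and every cost tensor C, OT_{k,ε}(C) = sup over all families of potentials F = (f^1, ..., f^k), f^ℓ ∈ ℝ^n, of the dual objective D(F) = (1/n)·Σ_{ℓ,i} f^ℓ(i) − ε·Σ_σ exp(((⊕F)(σ) − C(σ))/ε), and this supremum is attained. -/
open Finset Real

/-- The dual objective `D(F)` of entropic multi-marginal OT, for potentials
`F = (f^1, …, f^k)` with `f^ℓ ∈ ℝ^n`. -/
noncomputable def Dobj (n k : ℕ) (ε : ℝ) (C : (Fin k → Fin n) → ℝ)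
    (F : Fin k → Fin n → ℝ) : ℝ :=
  (1 / (n : ℝ)) * ∑ ℓ : Fin k, ∑ i : Fin n, F ℓ i
    - ε * ∑ σ : Fin k → Fin n, Real.exp (((∑ ℓ : Fin k, F ℓ (σ ℓ)) - C σ) / ε)

lemma pairing (n k : ℕ) (P : (Fin k → Fin n) → ℝ) (G : Fin k → Fin n → ℝ) :
    ∑ σ : Fin k → Fin n, P σ * (∑ ℓ : Fin k, G ℓ (σ ℓ))
      = ∑ ℓ : Fin k, ∑ i : Fin n, G ℓ i * marginal n k P ℓ i := by
  simp_rw [Finset.mul_sum]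
  rw [Finset.sum_comm]
  refine Finset.sum_congr rfl fun ℓ _ => ?_
  rw [← Finset.sum_fiberwise Finset.univ (fun σ : Fin k → Fin n => σ ℓ) (fun σ => P σ * G ℓ (σ ℓ))]
  refine Finset.sum_congr rfl fun i _ => ?_
  rw [marginal, Finset.mul_sum]
  refine Finset.sum_congr rfl fun σ hσ => ?_
  rw [Finset.mem_filter] at hσ
  rw [hσ.2, mul_comm]

lemma term_ineq (ε : ℝ) (hε : 0 < ε) (p c g : ℝ) (hp : 0 ≤ p) :
    p * g - ε * Real.exp ((g - c) / ε) ≤ p * c + ε * (p * (Real.log p - 1)) := by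
  rcases eq_or_lt_of_le hp with h | h
  · rw [← h]
    have := Real.exp_pos ((g - c) / ε)
    nlinarith
  · have hexp : Real.exp ((g - c) / ε) = p * Real.exp ((g - c) / ε - Real.log p) := by
      rw [Real.exp_sub, Real.exp_log h]
      field_simp
    have h2 : (g - c) / ε - Real.log p + 1 ≤ Real.exp ((g - c) / ε - Real.log p) :=
      Real.add_one_le_exp _
    have hkey : ε * ((g - c) / ε) = g - c := by field_simp
    nlinarith [mul_le_mul_of_nonneg_left h2 (le_of_lt (mul_pos hε h))]

lemma weak_duality (n k : ℕ) (ε : ℝ) (hε : 0 < ε) (C : (Fin k → Fin n) → ℝ)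
    (P : (Fin k → Fin n) → ℝ) (hP : P ∈ Bpoly n k) (G : Fin k → Fin n → ℝ) :
    Dobj n k ε C G ≤ hObj n k ε P C := by
  have h1 : (1 / (n : ℝ)) * ∑ ℓ : Fin k, ∑ i : Fin n, G ℓ i
      = ∑ σ : Fin k → Fin n, P σ * (∑ ℓ : Fin k, G ℓ (σ ℓ)) := by
    rw [pairing n k P G, Finset.mul_sum]
    refine Finset.sum_congr rfl fun ℓ _ => ?_
    rw [Finset.mul_sum]
    refine Finset.sum_congr rfl fun i _ => ?_
    rw [hP.2 ℓ i]
    ring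
  rw [Dobj, hObj, h1, Finset.mul_sum, Finset.mul_sum, ← Finset.sum_sub_distrib,
    ← Finset.sum_add_distrib]
  exact Finset.sum_le_sum fun σ _ => term_ineq ε hε (P σ) (C σ) _ (hP.1 σ)

lemma tsum_update (n k : ℕ) (F : Fin k → Fin n → ℝ) (ℓ : Fin k) (i : Fin n) (t : ℝ)
    (σ : Fin k → Fin n) :
    (∑ ℓ' : Fin k, (Function.update F ℓ (Function.update (F ℓ) i (F ℓ i + t))) ℓ' (σ ℓ'))
      = (∑ ℓ' : Fin k, F ℓ' (σ ℓ')) + (if σ ℓ = i then t else 0) := by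
  have : ∀ ℓ' : Fin k,
      (Function.update F ℓ (Function.update (F ℓ) i (F ℓ i + t))) ℓ' (σ ℓ')
        = F ℓ' (σ ℓ') + (if ℓ' = ℓ ∧ σ ℓ = i then t else 0) := by
    intro ℓ'
    rcases eq_or_ne ℓ' ℓ with h | h
    · subst h
      rw [Function.update_self]
      rcases eq_or_ne (σ ℓ') i with h2 | h2
      · rw [h2, Function.update_self]; simp [h2]
      · rw [Function.update_of_ne h2]; simp [h2]
    · rw [Function.update_of_ne h]; simp [h]
  simp_rw [this, Finset.sum_add_distrib]
  congr 1
  rcases eq_or_ne (σ ℓ) i with h2 | h2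
  · simp [h2, Finset.sum_ite_eq']
  · simp [h2]

lemma sumF_update (n k : ℕ) (F : Fin k → Fin n → ℝ) (ℓ : Fin k) (i : Fin n) (t : ℝ) :
    (∑ ℓ' : Fin k, ∑ i' : Fin n, (Function.update F ℓ (Function.update (F ℓ) i (F ℓ i + t))) ℓ' i')
      = (∑ ℓ' : Fin k, ∑ i' : Fin n, F ℓ' i') + t := by
  have h : ∀ ℓ' : Fin k,
      (∑ i' : Fin n, (Function.update F ℓ (Function.update (F ℓ) i (F ℓ i + t))) ℓ' i')
        = (∑ i' : Fin n, F ℓ' i') + (if ℓ' = ℓ then t else 0) := by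
    intro ℓ'
    rcases eq_or_ne ℓ' ℓ with h | h
    · subst h
      rw [Function.update_self, if_pos rfl, Finset.sum_update_of_mem (Finset.mem_univ i),
        ← Finset.add_sum_erase Finset.univ (fun i' => F ℓ' i') (Finset.mem_univ i),
        Finset.sdiff_singleton_eq_erase]
      ring
    · rw [Function.update_of_ne h, if_neg h, add_zero]
  simp_rw [h, Finset.sum_add_distrib, Finset.sum_ite_eq' Finset.univ ℓ (fun _ => t),
    if_pos (Finset.mem_univ ℓ)]

lemma Dobj_update (n k : ℕ) (ε : ℝ) (hε : 0 < ε) (C : (Fin k → Fin n) → ℝ)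
    (F : Fin k → Fin n → ℝ) (ℓ : Fin k) (i : Fin n) (t : ℝ) :
    Dobj n k ε C (Function.update F ℓ (Function.update (F ℓ) i (F ℓ i + t)))
      = Dobj n k ε C F + t / n
        - ε * (marginal n k (fun σ => Real.exp (((∑ ℓ' : Fin k, F ℓ' (σ ℓ')) - C σ) / ε)) ℓ i)
            * (Real.exp (t / ε) - 1) := by
  rw [Dobj, Dobj, sumF_update]
  have hsplit : ∑ σ : Fin k → Fin n,
      Real.exp (((∑ ℓ' : Fin k,
        (Function.update F ℓ (Function.update (F ℓ) i (F ℓ i + t))) ℓ' (σ ℓ')) - C σ) / ε)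
      = (∑ σ : Fin k → Fin n, Real.exp (((∑ ℓ' : Fin k, F ℓ' (σ ℓ')) - C σ) / ε))
        + (marginal n k (fun σ => Real.exp (((∑ ℓ' : Fin k, F ℓ' (σ ℓ')) - C σ) / ε)) ℓ i)
            * (Real.exp (t / ε) - 1) := by
    simp_rw [tsum_update]
    rw [← Finset.sum_filter_add_sum_filter_not Finset.univ (fun σ : Fin k → Fin n => σ ℓ = i)]
    rw [← Finset.sum_filter_add_sum_filter_not Finset.univ (fun σ : Fin k → Fin n => σ ℓ = i)
      (fun σ => Real.exp (((∑ ℓ' : Fin k, F ℓ' (σ ℓ')) - C σ) / ε))]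
    rw [marginal, Finset.sum_mul]
    have e1 : ∀ σ ∈ Finset.univ.filter (fun σ : Fin k → Fin n => σ ℓ = i),
        Real.exp (((∑ ℓ' : Fin k, F ℓ' (σ ℓ')) + (if σ ℓ = i then t else 0) - C σ) / ε)
          = Real.exp (((∑ ℓ' : Fin k, F ℓ' (σ ℓ')) - C σ) / ε) * Real.exp (t / ε) := by
      intro σ hσ
      rw [Finset.mem_filter] at hσ
      rw [if_pos hσ.2, ← Real.exp_add]
      congr 1
      field_simp
      ring
    have e2 : ∀ σ ∈ Finset.univ.filter (fun σ : Fin k → Fin n => ¬ σ ℓ = i),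
        Real.exp (((∑ ℓ' : Fin k, F ℓ' (σ ℓ')) + (if σ ℓ = i then t else 0) - C σ) / ε)
          = Real.exp (((∑ ℓ' : Fin k, F ℓ' (σ ℓ')) - C σ) / ε) := by
      intro σ hσ
      rw [Finset.mem_filter] at hσ
      rw [if_neg hσ.2, add_zero]
    rw [Finset.sum_congr rfl e1, Finset.sum_congr rfl e2]
    simp_rw [mul_sub, mul_one]
    rw [Finset.sum_sub_distrib]
    ring
  rw [hsplit]
  ring


lemma exp_linear_bound (y : ℝ) : Real.exp 1 * y ≤ Real.exp y := by
  have h := Real.add_one_le_exp (y - 1)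
  have h2 : Real.exp (y - 1) * Real.exp 1 = Real.exp y := by
    rw [← Real.exp_add]; ring_nf
  nlinarith [Real.exp_pos (1:ℝ)]

set_option maxHeartbeats 1000000 in
lemma bound_exists (n k : ℕ) (hn : 1 ≤ n) (hk : 1 ≤ k) (ε : ℝ) (hε : 0 < ε)
    (C : (Fin k → Fin n) → ℝ) (D0 : ℝ) :
    ∃ R : ℝ, 0 ≤ R ∧ ∀ F : Fin k → Fin n → ℝ,
      (∀ ℓ : Fin k, ℓ ≠ ⟨0, hk⟩ → ∑ i : Fin n, F ℓ i = 0) →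
      D0 ≤ Dobj n k ε C F → ∀ ℓ i, |F ℓ i| ≤ R := by
  haveI : Nonempty (Fin n) := ⟨⟨0, hn⟩⟩
  have hn' : (0:ℝ) < n := by exact_mod_cast Nat.lt_of_lt_of_le Nat.zero_lt_one hn
  have hk' : (1:ℝ) ≤ k := by exact_mod_cast hk
  obtain ⟨Cmax, hC⟩ : ∃ M : ℝ, ∀ σ : Fin k → Fin n, C σ ≤ M :=
    ⟨Finset.univ.sup' Finset.univ_nonempty C, fun σ => Finset.le_sup' C (Finset.mem_univ σ)⟩
  have he1 : (1:ℝ) < Real.exp 1 := Real.one_lt_exp_iff.mpr one_pos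
  set B1 : ℝ := (Real.exp 1 * Cmax - D0) / (Real.exp 1 - 1) with hB1
  set B2 : ℝ := max ((B1 - D0) / ε) 1 with hB2
  have hB2_one : (1:ℝ) ≤ B2 := le_max_right _ _
  have hB2pos : (0:ℝ) < B2 := lt_of_lt_of_le one_pos hB2_one
  set B3 : ℝ := Cmax + ε * Real.log B2 with hB3
  set B4 : ℝ := B3 - ((k:ℝ) - 1) * min D0 0 with hB4
  set Lo : ℝ := (n:ℝ) * min D0 0 - ((n:ℝ) - 1) * B4 with hLo
  clear_value B1 B2 B3 B4 Lo
  refine ⟨max 0 (max B4 (-Lo)), le_max_left _ _, ?_⟩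
  intro F hnorm hDF ℓ i
  have hDobjF : Dobj n k ε C F = (1 / (n:ℝ)) * (∑ ℓ' : Fin k, ∑ i' : Fin n, F ℓ' i')
      - ε * ∑ σ : Fin k → Fin n, Real.exp (((∑ ℓ' : Fin k, F ℓ' (σ ℓ')) - C σ) / ε) := rfl
  have hEpos : (0:ℝ) < ∑ σ : Fin k → Fin n,
      Real.exp (((∑ ℓ' : Fin k, F ℓ' (σ ℓ')) - C σ) / ε) :=
    Finset.sum_pos (fun σ _ => Real.exp_pos _) Finset.univ_nonempty
  have hS_low : D0 ≤ (1 / (n:ℝ)) * (∑ ℓ' : Fin k, ∑ i' : Fin n, F ℓ' i') := by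
    rw [hDobjF] at hDF
    nlinarith
  have hS_low' : (n:ℝ) * D0 ≤ ∑ ℓ' : Fin k, ∑ i' : Fin n, F ℓ' i' := by
    rw [one_div] at hS_low
    have := (le_inv_mul_iff₀ hn').mp hS_low
    linarith
  obtain ⟨j, hj⟩ : ∃ j : Fin k → Fin n, ∀ ℓ' i', F ℓ' i' ≤ F ℓ' (j ℓ') := by
    have h := fun ℓ' : Fin k => Finite.exists_max (F ℓ')
    choose j hj using h
    exact ⟨j, hj⟩
  have havg : ∀ ℓ', (∑ i' : Fin n, F ℓ' i') ≤ (n:ℝ) * F ℓ' (j ℓ') := by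
    intro ℓ'
    have := Finset.sum_le_card_nsmul Finset.univ (F ℓ') (F ℓ' (j ℓ'))
      (fun i' _ => hj ℓ' i')
    simpa [Finset.card_univ, nsmul_eq_mul] using this
  have hsum_j : (1 / (n:ℝ)) * (∑ ℓ' : Fin k, ∑ i' : Fin n, F ℓ' i')
      ≤ ∑ ℓ' : Fin k, F ℓ' (j ℓ') := by
    have h1 : (∑ ℓ' : Fin k, ∑ i' : Fin n, F ℓ' i')
        ≤ (n:ℝ) * ∑ ℓ' : Fin k, F ℓ' (j ℓ') := by
      rw [Finset.mul_sum]
      exact Finset.sum_le_sum fun ℓ' _ => havg ℓ'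
    rw [one_div, inv_mul_le_iff₀ hn']
    linarith
  have hEj : Real.exp (((∑ ℓ' : Fin k, F ℓ' (j ℓ')) - C j) / ε)
      ≤ ∑ σ : Fin k → Fin n, Real.exp (((∑ ℓ' : Fin k, F ℓ' (σ ℓ')) - C σ) / ε) :=
    Finset.single_le_sum
      (f := fun σ : Fin k → Fin n => Real.exp (((∑ ℓ' : Fin k, F ℓ' (σ ℓ')) - C σ) / ε))
      (fun σ _ => (Real.exp_pos _).le) (Finset.mem_univ j)
  have hSn_le_B1 : (1 / (n:ℝ)) * (∑ ℓ' : Fin k, ∑ i' : Fin n, F ℓ' i') ≤ B1 := by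
    set s : ℝ := (1 / (n:ℝ)) * (∑ ℓ' : Fin k, ∑ i' : Fin n, F ℓ' i') with hs
    have h1 : Real.exp ((s - Cmax) / ε)
        ≤ Real.exp (((∑ ℓ' : Fin k, F ℓ' (j ℓ')) - C j) / ε) := by
      apply Real.exp_le_exp.mpr
      gcongr
      have := hC j
      linarith [hsum_j]
    have h2 : Real.exp 1 * ((s - Cmax) / ε) ≤ Real.exp ((s - Cmax) / ε) :=
      exp_linear_bound _
    have h3 : ε * Real.exp ((s - Cmax) / ε)
        ≤ ε * ∑ σ : Fin k → Fin n, Real.exp (((∑ ℓ' : Fin k, F ℓ' (σ ℓ')) - C σ) / ε) := by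
      apply mul_le_mul_of_nonneg_left (le_trans h1 hEj) hε.le
    have h4 : Real.exp 1 * (s - Cmax) ≤ ε * Real.exp ((s - Cmax) / ε) := by
      have := mul_le_mul_of_nonneg_left h2 hε.le
      calc Real.exp 1 * (s - Cmax) = ε * (Real.exp 1 * ((s - Cmax) / ε)) := by
            field_simp <;> ring
        _ ≤ ε * Real.exp ((s - Cmax) / ε) := this
    rw [hDobjF] at hDF
    rw [hB1, le_div_iff₀ (by linarith : (0:ℝ) < Real.exp 1 - 1)]
    nlinarith
  -- bound on the exponential sum
  have hE_le : (∑ σ : Fin k → Fin n,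
      Real.exp (((∑ ℓ' : Fin k, F ℓ' (σ ℓ')) - C σ) / ε)) ≤ B2 := by
    rw [hDobjF] at hDF
    have h1 : ε * (∑ σ : Fin k → Fin n,
        Real.exp (((∑ ℓ' : Fin k, F ℓ' (σ ℓ')) - C σ) / ε)) ≤ B1 - D0 := by
      linarith [hSn_le_B1]
    have h2 : (∑ σ : Fin k → Fin n,
        Real.exp (((∑ ℓ' : Fin k, F ℓ' (σ ℓ')) - C σ) / ε)) ≤ (B1 - D0) / ε := by
      rw [le_div_iff₀ hε]
      linarith
    exact le_trans h2 (hB2 ▸ le_max_left _ _)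
  -- every tensor sum is bounded by B3
  have htens : ∀ σ : Fin k → Fin n, (∑ ℓ' : Fin k, F ℓ' (σ ℓ')) ≤ B3 := by
    intro σ
    have h1 : Real.exp (((∑ ℓ' : Fin k, F ℓ' (σ ℓ')) - C σ) / ε) ≤ B2 := by
      refine le_trans ?_ hE_le
      exact Finset.single_le_sum
        (f := fun σ : Fin k → Fin n => Real.exp (((∑ ℓ' : Fin k, F ℓ' (σ ℓ')) - C σ) / ε))
        (fun σ _ => (Real.exp_pos _).le) (Finset.mem_univ σ)
    have h2 : ((∑ ℓ' : Fin k, F ℓ' (σ ℓ')) - C σ) / ε ≤ Real.log B2 :=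
      (Real.le_log_iff_exp_le hB2pos).mpr h1
    rw [div_le_iff₀ hε] at h2
    have := hC σ
    rw [hB3]
    nlinarith
  -- entrywise upper bound by B4
  have hupper : ∀ (ℓ1 : Fin k) (i1 : Fin n), F ℓ1 i1 ≤ B4 := by
    intro ℓ1 i1
    classical
    set σ : Fin k → Fin n := fun ℓ' => if ℓ' = ℓ1 then i1 else j ℓ' with hσ
    clear_value σ
    have hlb : ∀ ℓ' : Fin k,
        (min D0 0 + if ℓ' = ℓ1 then F ℓ1 i1 - min D0 0 else 0) ≤ F ℓ' (σ ℓ') := by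
      intro ℓ'
      rcases eq_or_ne ℓ' ℓ1 with h | h
      · subst h
        have hσv : σ ℓ' = i1 := by rw [hσ]; simp
        rw [hσv, if_pos rfl]
        linarith
      · have hσv : σ ℓ' = j ℓ' := by rw [hσ]; simp [h]
        rw [hσv, if_neg h, add_zero]
        rcases eq_or_ne ℓ' ⟨0, hk⟩ with h0 | h0
        · have hsum0 : D0 ≤ F ℓ' (j ℓ') := by
            have hSS : (∑ ℓ'' : Fin k, ∑ i' : Fin n, F ℓ'' i') = ∑ i' : Fin n, F ℓ' i' := by
              subst h0
              exact Finset.sum_eq_single _ (fun b _ hb => hnorm b hb) (by simp)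
            have h2 := havg ℓ'
            rw [← hSS] at h2
            nlinarith [hS_low']
          linarith [min_le_left D0 0]
        · have h2 := havg ℓ'
          rw [hnorm ℓ' h0] at h2
          have : 0 ≤ F ℓ' (j ℓ') := by nlinarith
          linarith [min_le_right D0 0]
    have hsum_lb : F ℓ1 i1 + ((k:ℝ) - 1) * min D0 0 ≤ ∑ ℓ' : Fin k, F ℓ' (σ ℓ') := by
      refine le_trans (le_of_eq ?_) (Finset.sum_le_sum fun ℓ' _ => hlb ℓ')
      rw [Finset.sum_add_distrib, Finset.sum_const, Finset.sum_ite_eq' Finset.univ ℓ1,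
        if_pos (Finset.mem_univ ℓ1), Finset.card_univ, Fintype.card_fin, nsmul_eq_mul]
      ring
    have := htens σ
    rw [hB4]
    linarith
  -- entrywise lower bound by Lo
  have hlower : ∀ (ℓ1 : Fin k) (i1 : Fin n), Lo ≤ F ℓ1 i1 := by
    intro ℓ1 i1
    have herase : (∑ i' ∈ Finset.univ.erase i1, F ℓ1 i') ≤ ((n:ℝ) - 1) * B4 := by
      have h1 := Finset.sum_le_card_nsmul (Finset.univ.erase i1) (F ℓ1) B4
        (fun i' _ => hupper ℓ1 i')
      rw [Finset.card_erase_of_mem (Finset.mem_univ i1), Finset.card_univ,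
        Fintype.card_fin, nsmul_eq_mul] at h1
      have hcast : ((n - 1 : ℕ) : ℝ) = (n:ℝ) - 1 := by
        rw [Nat.cast_sub hn]; norm_num
      rw [hcast] at h1
      exact h1
    have hdecomp : F ℓ1 i1 = (∑ i' : Fin n, F ℓ1 i') - ∑ i' ∈ Finset.univ.erase i1, F ℓ1 i' := by
      rw [← Finset.add_sum_erase Finset.univ (F ℓ1) (Finset.mem_univ i1)]
      ring
    rcases eq_or_ne ℓ1 ⟨0, hk⟩ with h0 | h0
    · have hSS : (∑ ℓ'' : Fin k, ∑ i' : Fin n, F ℓ'' i') = ∑ i' : Fin n, F ℓ1 i' := by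
        subst h0
        exact Finset.sum_eq_single _ (fun b _ hb => hnorm b hb) (by simp)
      rw [← hSS] at hdecomp
      rw [hLo]
      have hmin : (n:ℝ) * min D0 0 ≤ (n:ℝ) * D0 :=
        mul_le_mul_of_nonneg_left (min_le_left _ _) hn'.le
      linarith [hS_low']
    · rw [hnorm ℓ1 h0] at hdecomp
      rw [hLo]
      have hmin : (n:ℝ) * min D0 0 ≤ 0 :=
        mul_nonpos_of_nonneg_of_nonpos hn'.le (min_le_right _ _)
      linarith
  rw [abs_le]
  constructor
  · have := hlower ℓ i
    have h2 : -(max 0 (max B4 (-Lo))) ≤ Lo := by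
      have : -Lo ≤ max 0 (max B4 (-Lo)) := le_trans (le_max_right _ _) (le_max_right _ _)
      linarith
    linarith
  · exact le_trans (hupper ℓ i) (le_trans (le_max_left _ _) (le_max_right _ _))
lemma Dobj_continuous' (n k : ℕ) (ε : ℝ) (C : (Fin k → Fin n) → ℝ) :
    Continuous (Dobj n k ε C) := by
  unfold Dobj
  fun_prop

lemma Dobj_shift (n k : ℕ) (ε : ℝ) (C : (Fin k → Fin n) → ℝ) (G : Fin k → Fin n → ℝ)
    (c : Fin k → ℝ) (hc : ∑ ℓ : Fin k, c ℓ = 0) :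
    Dobj n k ε C (fun ℓ i => G ℓ i + c ℓ) = Dobj n k ε C G := by
  unfold Dobj
  have h1 : ∀ σ : Fin k → Fin n,
      (∑ ℓ : Fin k, (G ℓ (σ ℓ) + c ℓ)) = ∑ ℓ : Fin k, G ℓ (σ ℓ) := by
    intro σ
    rw [Finset.sum_add_distrib, hc, add_zero]
  simp_rw [h1]
  have h2 : ∑ ℓ : Fin k, ∑ i : Fin n, (G ℓ i + c ℓ) = ∑ ℓ : Fin k, ∑ i : Fin n, G ℓ i := by
    simp_rw [Finset.sum_add_distrib, Finset.sum_const, ← Finset.smul_sum, hc, smul_zero,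
      add_zero]
  rw [h2]

lemma exists_max (n k : ℕ) (hn : 1 ≤ n) (hk : 1 ≤ k) (ε : ℝ) (hε : 0 < ε)
    (C : (Fin k → Fin n) → ℝ) :
    ∃ F : Fin k → Fin n → ℝ, ∀ G, Dobj n k ε C G ≤ Dobj n k ε C F := by
  haveI : Nonempty (Fin n) := ⟨⟨0, hn⟩⟩
  have hn' : (0:ℝ) < n := by exact_mod_cast Nat.lt_of_lt_of_le Nat.zero_lt_one hn
  obtain ⟨R, hR0, hR⟩ := bound_exists n k hn hk ε hε C (Dobj n k ε C 0)
  set K : Set (Fin k → Fin n → ℝ) :=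
    Set.univ.pi (fun _ : Fin k => Set.univ.pi fun _ : Fin n => Set.Icc (-R) R) with hK
  have hKc : IsCompact K :=
    isCompact_univ_pi fun _ => isCompact_univ_pi fun _ => isCompact_Icc
  have h0K : (0 : Fin k → Fin n → ℝ) ∈ K := by
    rw [hK]
    intro ℓ _
    intro i _
    exact ⟨neg_nonpos.mpr hR0, hR0⟩
  obtain ⟨F, hFK, hFmax⟩ :=
    hKc.exists_isMaxOn ⟨0, h0K⟩ (Dobj_continuous' n k ε C).continuousOn
  have hFmax' := isMaxOn_iff.mp hFmax
  refine ⟨F, fun G => ?_⟩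
  set a : Fin k → ℝ := fun ℓ => (1/(n:ℝ)) * ∑ i : Fin n, G ℓ i with ha
  set c : Fin k → ℝ := fun ℓ => (if ℓ = ⟨0, hk⟩ then ∑ ℓ' : Fin k, a ℓ' else 0) - a ℓ with hc
  have hcsum : ∑ ℓ : Fin k, c ℓ = 0 := by
    rw [hc]
    rw [Finset.sum_sub_distrib, Finset.sum_ite_eq' Finset.univ (⟨0, hk⟩ : Fin k)
      (fun _ => ∑ ℓ' : Fin k, a ℓ'), if_pos (Finset.mem_univ _)]
    ring
  have hG' : Dobj n k ε C (fun ℓ i => G ℓ i + c ℓ) = Dobj n k ε C G :=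
    Dobj_shift n k ε C G c hcsum
  have hnormG' : ∀ ℓ : Fin k, ℓ ≠ ⟨0, hk⟩ →
      ∑ i : Fin n, (G ℓ i + c ℓ) = 0 := by
    intro ℓ hℓ
    rw [Finset.sum_add_distrib, Finset.sum_const, Finset.card_univ, Fintype.card_fin,
      nsmul_eq_mul, hc]
    simp only [if_neg hℓ, zero_sub, ha]
    field_simp
    ring
  rcases le_total (Dobj n k ε C G) (Dobj n k ε C 0) with h | h
  · exact le_trans h (hFmax' 0 h0K)
  · have hb := hR (fun ℓ i => G ℓ i + c ℓ) hnormG' (hG'.symm ▸ h)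
    have hG'K : (fun ℓ i => G ℓ i + c ℓ) ∈ K := by
      rw [hK]
      intro ℓ _
      intro i _
      have := hb ℓ i
      rw [abs_le] at this
      exact ⟨this.1, this.2⟩
    calc Dobj n k ε C G = Dobj n k ε C (fun ℓ i => G ℓ i + c ℓ) := hG'.symm
      _ ≤ Dobj n k ε C F := hFmax' _ hG'K

lemma max_marginal (n k : ℕ) (hn : 1 ≤ n) (hk : 1 ≤ k) (ε : ℝ) (hε : 0 < ε)
    (C : (Fin k → Fin n) → ℝ) (F : Fin k → Fin n → ℝ)
    (hmax : ∀ G, Dobj n k ε C G ≤ Dobj n k ε C F) (ℓ : Fin k) (i : Fin n) :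
    marginal n k (fun σ => Real.exp (((∑ ℓ' : Fin k, F ℓ' (σ ℓ')) - C σ) / ε)) ℓ i
      = 1 / (n : ℝ) := by
  have hn' : (0:ℝ) < n := by exact_mod_cast Nat.lt_of_lt_of_le Nat.zero_lt_one hn
  set m := marginal n k (fun σ => Real.exp (((∑ ℓ' : Fin k, F ℓ' (σ ℓ')) - C σ) / ε)) ℓ i
    with hm
  have hmpos : 0 < m := by
    rw [hm, marginal]
    apply Finset.sum_pos (fun σ _ => Real.exp_pos _)
    exact ⟨fun _ => i, by simp⟩
  by_contra hne
  have hu : (n:ℝ) * m ≠ 1 := by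
    intro h
    apply hne
    field_simp
    linarith [h]
  have hupos : 0 < (n:ℝ) * m := mul_pos hn' hmpos
  set t : ℝ := -(ε * Real.log ((n:ℝ) * m)) with ht
  have het : Real.exp (t / ε) = 1 / ((n:ℝ) * m) := by
    rw [ht]
    have : -(ε * Real.log ((n:ℝ) * m)) / ε = -Real.log ((n:ℝ) * m) := by
      field_simp
    rw [this, Real.exp_neg, Real.exp_log hupos, one_div]
  have hle := hmax (Function.update F ℓ (Function.update (F ℓ) i (F ℓ i + t)))
  rw [Dobj_update n k ε hε C F ℓ i t, ← hm, het] at hle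
  have hlog := Real.log_lt_sub_one_of_pos hupos hu
  have key : 0 < t / (n:ℝ) - ε * m * (1 / ((n:ℝ) * m) - 1) := by
    have hexp : t / (n:ℝ) - ε * m * (1 / ((n:ℝ) * m) - 1)
        = (ε / n) * (((n:ℝ) * m) - 1 - Real.log ((n:ℝ) * m)) := by
      rw [ht]
      field_simp
      ring
    rw [hexp]
    exact mul_pos (div_pos hε hn') (by linarith)
  linarith


lemma primal_eq (n k : ℕ) (hn : 1 ≤ n) (ε : ℝ) (hε : 0 < ε)
    (C : (Fin k → Fin n) → ℝ) (F : Fin k → Fin n → ℝ)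
    (hmarg : ∀ (ℓ : Fin k) (i : Fin n),
      marginal n k (fun σ => Real.exp (((∑ ℓ' : Fin k, F ℓ' (σ ℓ')) - C σ) / ε)) ℓ i
        = 1 / (n : ℝ)) :
    hObj n k ε (fun σ => Real.exp (((∑ ℓ' : Fin k, F ℓ' (σ ℓ')) - C σ) / ε)) C
      = Dobj n k ε C F := by
  have hterm : ∀ σ : Fin k → Fin n,
      Real.exp (((∑ ℓ' : Fin k, F ℓ' (σ ℓ')) - C σ) / ε) * C σ
        + ε * (Real.exp (((∑ ℓ' : Fin k, F ℓ' (σ ℓ')) - C σ) / ε)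
            * (Real.log (Real.exp (((∑ ℓ' : Fin k, F ℓ' (σ ℓ')) - C σ) / ε)) - 1))
      = Real.exp (((∑ ℓ' : Fin k, F ℓ' (σ ℓ')) - C σ) / ε) * (∑ ℓ' : Fin k, F ℓ' (σ ℓ'))
        - ε * Real.exp (((∑ ℓ' : Fin k, F ℓ' (σ ℓ')) - C σ) / ε) := by
    intro σ
    rw [Real.log_exp]
    field_simp
    ring
  rw [hObj, Dobj, Finset.mul_sum, ← Finset.sum_add_distrib]
  rw [Finset.sum_congr rfl fun σ _ => hterm σ, Finset.sum_sub_distrib,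
    ← Finset.mul_sum, pairing n k _ F]
  congr 1
  simp_rw [hmarg]
  rw [Finset.mul_sum]
  refine Finset.sum_congr rfl fun ℓ _ => ?_
  rw [Finset.mul_sum]
  exact Finset.sum_congr rfl fun i _ => mul_comm _ _

theorem strong_duality (n k : ℕ) (hn : 1 ≤ n) (hk : 1 ≤ k) (ε : ℝ) (hε : 0 < ε)
    (C : (Fin k → Fin n) → ℝ) :
    ∃ F : Fin k → Fin n → ℝ,
      (∀ G : Fin k → Fin n → ℝ, Dobj n k ε C G ≤ Dobj n k ε C F) ∧
      Dobj n k ε C F = OTval n k ε C := by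
  obtain ⟨F, hFmax⟩ := exists_max n k hn hk ε hε C
  have hmarg := max_marginal n k hn hk ε hε C F hFmax
  have hEB : (fun σ => Real.exp (((∑ ℓ' : Fin k, F ℓ' (σ ℓ')) - C σ) / ε)) ∈ Bpoly n k :=
    ⟨fun σ => (Real.exp_pos _).le, hmarg⟩
  have heq : hObj n k ε (fun σ => Real.exp (((∑ ℓ' : Fin k, F ℓ' (σ ℓ')) - C σ) / ε)) C
      = Dobj n k ε C F := primal_eq n k hn ε hε C F hmarg
  refine ⟨F, hFmax, ?_⟩
  have hne : ((fun P => hObj n k ε P C) '' Bpoly n k).Nonempty :=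
    ⟨_, ⟨_, hEB, rfl⟩⟩
  have hbdd : BddBelow ((fun P => hObj n k ε P C) '' Bpoly n k) := by
    refine ⟨Dobj n k ε C F, ?_⟩
    rintro x ⟨P, hP, rfl⟩
    exact weak_duality n k ε hε C P hP F
  apply le_antisymm
  · rw [OTval]
    apply le_csInf hne
    rintro x ⟨P, hP, rfl⟩
    exact weak_duality n k ε hε C P hP F
  · rw [OTval, ← heq]
    exact csInf_le hbdd ⟨_, hEB, rfl⟩
end

section
/- (Primal-dual relation, equation (9).) Fix ε > 0 and a cost tensor C. If F* = (f*^1, ..., f*^k) maximizes the dual objective D(F) = (1/n)·Σ_{ℓ,i} f^ℓ(i) − ε·Σ_σ exp(((⊕F)(σ) − C(σ))/ε), then the tensor P* defined entrywise by P*(σ) = exp(((⊕F*)(σ) − C(σ))/ε) belongs to the polystochastic polytope B_{n,k} and is the unique minimizer of h_{k,ε}(·, C) over B_{n,k}, i.e. P* = P_ε(C). -/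
open Finset Real

/-- Pointwise entropy inequality: for `p > 0`, `q ≥ 0`,
`q (log q - 1) - q log p + p ≥ 0`, strictly unless `q = p`. -/
lemma aux_entropy_ineq (p q : ℝ) (hp : 0 < p) (hq : 0 ≤ q) :
    0 ≤ q * (Real.log q - 1) - q * Real.log p + p ∧
      (q ≠ p → 0 < q * (Real.log q - 1) - q * Real.log p + p) := by
  rcases hq.eq_or_lt with h | h
  · subst h
    refine ⟨by simpa using hp.le, fun _ => by simpa using hp⟩
  · -- q > 0
    have hle : Real.log (p / q) ≤ p / q - 1 := Real.log_le_sub_one_of_pos (by positivity)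
    have hlog : Real.log (p / q) = Real.log p - Real.log q := Real.log_div hp.ne' h.ne'
    have hdiv : q * (p / q) = p := by field_simp
    constructor
    · nlinarith [mul_le_mul_of_nonneg_left hle h.le]
    · intro hne
      have h1 : p / q ≠ 1 := by
        intro hc
        apply hne
        field_simp at hc
        linarith
      have hlt : Real.log (p / q) < p / q - 1 := Real.log_lt_sub_one_of_pos (by positivity) h1
      nlinarith [mul_lt_mul_of_pos_left hlt h]

theorem primal_dual_relation (n k : ℕ) (hn : 1 ≤ n) (hk : 1 ≤ k) (ε : ℝ) (hε : 0 < ε)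
    (C : (Fin k → Fin n) → ℝ) (Fstar : Fin k → Fin n → ℝ)
    (hFstar : ∀ G : Fin k → Fin n → ℝ, Dobj n k ε C G ≤ Dobj n k ε C Fstar)
    (Pstar : (Fin k → Fin n) → ℝ)
    (hPstar : ∀ σ, Pstar σ = Real.exp (((∑ ℓ : Fin k, Fstar ℓ (σ ℓ)) - C σ) / ε)) :
    Pstar ∈ Bpoly n k ∧
    (∀ Q ∈ Bpoly n k, hObj n k ε Pstar C ≤ hObj n k ε Q C) ∧
    (∀ Q ∈ Bpoly n k, Q ≠ Pstar → hObj n k ε Pstar C < hObj n k ε Q C) := by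
  set S : (Fin k → Fin n) → ℝ := fun σ => ∑ ℓ : Fin k, Fstar ℓ (σ ℓ) with hS
  set a : (Fin k → Fin n) → ℝ := fun σ => S σ - C σ with ha
  have hPa : ∀ σ, Pstar σ = Real.exp (a σ / ε) := hPstar
  have hPpos : ∀ σ, 0 < Pstar σ := fun σ => (hPa σ) ▸ Real.exp_pos _
  -- Step 1: the marginals of Pstar are all 1/n (first-order optimality of Fstar).
  have hmarg : ∀ (ℓ : Fin k) (i : Fin n), marginal n k Pstar ℓ i = 1 / (n : ℝ) := by
    intro ℓ i
    set b : (Fin k → Fin n) → ℝ := fun σ => if σ ℓ = i then 1 else 0 with hb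
    set T : ℝ := ∑ ℓ' : Fin k, ∑ i' : Fin n, Fstar ℓ' i' with hT
    set G : ℝ → Fin k → Fin n → ℝ :=
      fun t ℓ' i' => Fstar ℓ' i' + if ℓ' = ℓ ∧ i' = i then t else 0 with hG
    set φ : ℝ → ℝ := fun t => Dobj n k ε C (G t) with hφ
    have hφeq : φ = fun t =>
        (1 / (n : ℝ)) * (T + t) - ε * ∑ σ : Fin k → Fin n, Real.exp ((a σ + b σ * t) / ε) := by
      funext t
      simp only [hφ, Dobj, hG]
      congr 1
      · congr 1
        have : ∀ ℓ' : Fin k, ∑ i' : Fin n, (Fstar ℓ' i' + if ℓ' = ℓ ∧ i' = i then t else 0)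
            = (∑ i' : Fin n, Fstar ℓ' i') + if ℓ' = ℓ then t else 0 := by
          intro ℓ'
          rw [Finset.sum_add_distrib]
          congr 1
          simp [ite_and, Finset.sum_ite_eq']
        rw [Finset.sum_congr rfl (fun ℓ' _ => this ℓ'), Finset.sum_add_distrib, ← hT]
        simp [Finset.sum_ite_eq']
      · congr 1
        apply Finset.sum_congr rfl
        intro σ _
        congr 1
        have h1 : ∑ ℓ' : Fin k, (Fstar ℓ' (σ ℓ') + if ℓ' = ℓ ∧ σ ℓ' = i then t else 0)
            = S σ + if σ ℓ = i then t else 0 := by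
          rw [Finset.sum_add_distrib]
          congr 1
          simp [ite_and, Finset.sum_ite_eq']
        rw [h1, ha, hb]
        by_cases hc : σ ℓ = i <;> simp [hc] <;> ring
    have hder : ∀ σ : Fin k → Fin n,
        HasDerivAt (fun t => Real.exp ((a σ + b σ * t) / ε))
          (Real.exp (a σ / ε) * (b σ / ε)) 0 := by
      intro σ
      have h := ((((hasDerivAt_id (0:ℝ)).const_mul (b σ)).const_add (a σ)).div_const ε).exp
      simpa using h
    have hsum : HasDerivAt (fun t => ∑ σ : Fin k → Fin n, Real.exp ((a σ + b σ * t) / ε))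
        (∑ σ : Fin k → Fin n, Real.exp (a σ / ε) * (b σ / ε)) 0 :=
      HasDerivAt.fun_sum (fun σ _ => hder σ)
    have h1 : HasDerivAt (fun t => (1 / (n : ℝ)) * (T + t)) (1 / (n : ℝ)) 0 := by
      have := ((hasDerivAt_id (0:ℝ)).const_add T).const_mul (1 / (n : ℝ))
      simpa using this
    have hφd : HasDerivAt φ
        (1 / (n : ℝ) - ε * ∑ σ : Fin k → Fin n, Real.exp (a σ / ε) * (b σ / ε)) 0 := by
      rw [hφeq]
      exact h1.sub (hsum.const_mul ε)
    have hG0 : G 0 = Fstar := by funext ℓ' i'; simp [hG]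
    have hlocmax : IsLocalMax φ 0 := by
      apply Filter.Eventually.of_forall
      intro t
      show φ t ≤ φ 0
      rw [hφ]
      simp only [hG0]
      exact hFstar (G t)
    have hzero := hlocmax.hasDerivAt_eq_zero hφd
    have hsum_eq : ε * ∑ σ : Fin k → Fin n, Real.exp (a σ / ε) * (b σ / ε)
        = ∑ σ : Fin k → Fin n, Real.exp (a σ / ε) * b σ := by
      rw [Finset.mul_sum]
      apply Finset.sum_congr rfl
      intro σ _
      field_simp
    have hmarg_eq : ∑ σ : Fin k → Fin n, Real.exp (a σ / ε) * b σ = marginal n k Pstar ℓ i := by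
      rw [marginal, Finset.sum_filter]
      apply Finset.sum_congr rfl
      intro σ _
      rw [hPa σ, hb]
      by_cases hc : σ ℓ = i <;> simp [hc]
    rw [hsum_eq, hmarg_eq] at hzero
    linarith
  have hPB : Pstar ∈ Bpoly n k := ⟨fun σ => (hPpos σ).le, hmarg⟩
  -- Step 2: for any Q in the polytope, ∑ Q·S is the same constant.
  have hsumS : ∀ Q ∈ Bpoly n k,
      ∑ σ : Fin k → Fin n, Q σ * S σ
        = (1 / (n : ℝ)) * ∑ ℓ : Fin k, ∑ i : Fin n, Fstar ℓ i := by
    intro Q hQ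
    have h1 : ∑ σ : Fin k → Fin n, Q σ * S σ
        = ∑ ℓ : Fin k, ∑ σ : Fin k → Fin n, Q σ * Fstar ℓ (σ ℓ) := by
      rw [Finset.sum_comm]
      apply Finset.sum_congr rfl
      intro σ _
      rw [hS, Finset.mul_sum]
    rw [h1, Finset.mul_sum]
    apply Finset.sum_congr rfl
    intro ℓ _
    have h2 : ∑ σ : Fin k → Fin n, Q σ * Fstar ℓ (σ ℓ)
        = ∑ i : Fin n, ∑ σ ∈ Finset.univ.filter (fun σ : Fin k → Fin n => σ ℓ = i),
            Q σ * Fstar ℓ (σ ℓ) :=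
      (Finset.sum_fiberwise univ (fun σ => σ ℓ) (fun σ => Q σ * Fstar ℓ (σ ℓ))).symm
    rw [h2, Finset.mul_sum]
    apply Finset.sum_congr rfl
    intro i _
    have h3 : ∑ σ ∈ Finset.univ.filter (fun σ : Fin k → Fin n => σ ℓ = i),
        Q σ * Fstar ℓ (σ ℓ)
        = (∑ σ ∈ Finset.univ.filter (fun σ : Fin k → Fin n => σ ℓ = i), Q σ) * Fstar ℓ i := by
      rw [Finset.sum_mul]
      apply Finset.sum_congr rfl
      intro σ hσ
      rw [(Finset.mem_filter.mp hσ).2]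
    rw [h3]
    have := hQ.2 ℓ i
    rw [marginal] at this
    rw [this]
  -- Step 3: rewrite the primal objective using the dual potentials.
  have hlogP : ∀ σ, Real.log (Pstar σ) = a σ / ε := by
    intro σ; rw [hPa σ, Real.log_exp]
  have hC : ∀ σ, C σ = S σ - ε * Real.log (Pstar σ) := by
    intro σ; rw [hlogP σ, ha]; field_simp; ring
  have hkey : ∀ Q ∈ Bpoly n k, hObj n k ε Q C
      = (1 / (n : ℝ)) * ∑ ℓ : Fin k, ∑ i : Fin n, Fstar ℓ i
        + ε * ∑ σ : Fin k → Fin n, (Q σ * (Real.log (Q σ) - 1) - Q σ * Real.log (Pstar σ)) := by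
    intro Q hQ
    rw [hObj]
    have h1 : ∑ σ : Fin k → Fin n, Q σ * C σ
        = ∑ σ : Fin k → Fin n, Q σ * S σ
          - ε * ∑ σ : Fin k → Fin n, Q σ * Real.log (Pstar σ) := by
      rw [Finset.mul_sum, ← Finset.sum_sub_distrib]
      apply Finset.sum_congr rfl
      intro σ _
      rw [hC σ]; ring
    rw [h1, hsumS Q hQ, Finset.sum_sub_distrib]
    ring
  -- Step 4: value at Pstar.
  have hPval : hObj n k ε Pstar C
      = (1 / (n : ℝ)) * ∑ ℓ : Fin k, ∑ i : Fin n, Fstar ℓ i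
        - ε * ∑ σ : Fin k → Fin n, Pstar σ := by
    rw [hkey Pstar hPB]
    have : ∑ σ : Fin k → Fin n, (Pstar σ * (Real.log (Pstar σ) - 1)
        - Pstar σ * Real.log (Pstar σ)) = ∑ σ : Fin k → Fin n, (-(Pstar σ)) := by
      apply Finset.sum_congr rfl
      intro σ _; ring
    rw [this, Finset.sum_neg_distrib]
    ring
  -- Step 5: difference formula and conclusion.
  have hdiff : ∀ Q ∈ Bpoly n k, hObj n k ε Q C - hObj n k ε Pstar C
      = ε * ∑ σ : Fin k → Fin n,
          (Q σ * (Real.log (Q σ) - 1) - Q σ * Real.log (Pstar σ) + Pstar σ) := by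
    intro Q hQ
    rw [hkey Q hQ, hPval, Finset.sum_add_distrib]
    ring
  refine ⟨hPB, ?_, ?_⟩
  · intro Q hQ
    have hsum_nonneg : 0 ≤ ∑ σ : Fin k → Fin n,
        (Q σ * (Real.log (Q σ) - 1) - Q σ * Real.log (Pstar σ) + Pstar σ) :=
      Finset.sum_nonneg fun σ _ =>
        (aux_entropy_ineq (Pstar σ) (Q σ) (hPpos σ) (hQ.1 σ)).1
    have := hdiff Q hQ
    nlinarith
  · intro Q hQ hne
    obtain ⟨σ₀, hσ₀⟩ := Function.ne_iff.mp hne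
    have hsum_pos : 0 < ∑ σ : Fin k → Fin n,
        (Q σ * (Real.log (Q σ) - 1) - Q σ * Real.log (Pstar σ) + Pstar σ) := by
      apply Finset.sum_pos'
      · exact fun σ _ => (aux_entropy_ineq (Pstar σ) (Q σ) (hPpos σ) (hQ.1 σ)).1
      · exact ⟨σ₀, Finset.mem_univ _,
          (aux_entropy_ineq (Pstar σ₀) (Q σ₀) (hPpos σ₀) (hQ.1 σ₀)).2 hσ₀⟩
    have := hdiff Q hQ
    nlinarith
end

section
/- (Output formula of the multi-marginal Sinkhorn algorithm.) Fix ε > 0 and a cost tensor C. If F* = (f*^1, ..., f*^k) maximizes the dual objective and P*(σ) = exp(((⊕F*)(σ) − C(σ))/ε), then OT_{k,ε}(C) = (1/n)·Σ_{ℓ,i} f*^ℓ(i) − ε·Σ_σ P*(σ). -/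
open Finset Real

lemma pointwise_ineq (p a : ℝ) (hp : 0 ≤ p) :
    0 ≤ p * Real.log p - p * a - p + Real.exp a := by
  rcases eq_or_lt_of_le hp with h | h
  · simp [← h]
    positivity
  · have h1 : (a - Real.log p) + 1 ≤ Real.exp (a - Real.log p) := Real.add_one_le_exp _
    have h2 : Real.exp (a - Real.log p) = Real.exp a / p := by
      rw [Real.exp_sub, Real.exp_log h]
    rw [h2] at h1
    have h3 : p * ((a - Real.log p) + 1) ≤ p * (Real.exp a / p) :=
      mul_le_mul_of_nonneg_left h1 h.le
    have h4 : p * (Real.exp a / p) = Real.exp a := by field_simp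
    nlinarith

lemma sum_mul_tensorSum (n k : ℕ) (P : (Fin k → Fin n) → ℝ) (f : Fin k → Fin n → ℝ) :
    ∑ σ : Fin k → Fin n, P σ * (∑ ℓ : Fin k, f ℓ (σ ℓ))
      = ∑ ℓ : Fin k, ∑ i : Fin n, f ℓ i * marginal n k P ℓ i := by
  simp_rw [Finset.mul_sum]
  rw [Finset.sum_comm]
  refine Finset.sum_congr rfl fun ℓ _ => ?_
  rw [← Finset.sum_fiberwise Finset.univ (fun σ : Fin k → Fin n => σ ℓ) (fun σ => P σ * f ℓ (σ ℓ))]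
  refine Finset.sum_congr rfl fun i _ => ?_
  rw [marginal, Finset.mul_sum]
  refine Finset.sum_congr rfl fun σ hσ => ?_
  rw [Finset.mem_filter] at hσ
  rw [hσ.2]; ring

lemma marginal_of_maximizer (n k : ℕ) (ε : ℝ) (hε : 0 < ε)
    (C : (Fin k → Fin n) → ℝ) (Fstar : Fin k → Fin n → ℝ)
    (hFstar : ∀ G : Fin k → Fin n → ℝ, Dobj n k ε C G ≤ Dobj n k ε C Fstar)
    (Pstar : (Fin k → Fin n) → ℝ)
    (hPstar : ∀ σ, Pstar σ = Real.exp (((∑ ℓ : Fin k, Fstar ℓ (σ ℓ)) - C σ) / ε))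
    (ℓ : Fin k) (i : Fin n) :
    marginal n k Pstar ℓ i = 1 / (n : ℝ) := by
  set m := marginal n k Pstar ℓ i with hm
  set S := ∑ σ : Fin k → Fin n, Pstar σ with hS
  have hDG : ∀ t : ℝ,
      Dobj n k ε C (Function.update Fstar ℓ (Function.update (Fstar ℓ) i (Fstar ℓ i + t)))
        = Dobj n k ε C Fstar + t / (n : ℝ) - ε * m * (Real.exp (t / ε) - 1) := by
    intro t
    set G := Function.update Fstar ℓ (Function.update (Fstar ℓ) i (Fstar ℓ i + t)) with hGdef
    have hG : ∀ ℓ' i', G ℓ' i' = Fstar ℓ' i' + if ℓ' = ℓ ∧ i' = i then t else 0 := by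
      intro ℓ' i'
      rw [hGdef]
      simp only [Function.update_apply]
      by_cases h : ℓ' = ℓ
      · subst h
        by_cases h2 : i' = i
        · subst h2; simp
        · simp [h2]
      · simp [h]
    have hlin : ∑ ℓ' : Fin k, ∑ i' : Fin n, G ℓ' i'
        = (∑ ℓ' : Fin k, ∑ i' : Fin n, Fstar ℓ' i') + t := by
      simp_rw [hG, Finset.sum_add_distrib]
      congr 1
      have hx : ∀ x : Fin k, (∑ x1 : Fin n, if x = ℓ ∧ x1 = i then t else 0)
          = if x = ℓ then t else 0 := by
        intro x; by_cases h : x = ℓ <;> simp [h]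
      simp_rw [hx]
      simp
    have hten : ∀ σ : Fin k → Fin n,
        (∑ ℓ' : Fin k, G ℓ' (σ ℓ')) = (∑ ℓ' : Fin k, Fstar ℓ' (σ ℓ')) + if σ ℓ = i then t else 0 := by
      intro σ
      simp_rw [hG, Finset.sum_add_distrib]
      congr 1
      simp_rw [ite_and]
      rw [Finset.sum_ite_eq' (Finset.univ : Finset (Fin k)) ℓ]
      simp
    have hexp : ∑ σ : Fin k → Fin n, Real.exp (((∑ ℓ' : Fin k, G ℓ' (σ ℓ')) - C σ) / ε)
        = S + m * (Real.exp (t / ε) - 1) := by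
      have : ∀ σ : Fin k → Fin n, Real.exp (((∑ ℓ' : Fin k, G ℓ' (σ ℓ')) - C σ) / ε)
          = if σ ℓ = i then Pstar σ * Real.exp (t / ε) else Pstar σ := by
        intro σ
        rw [hten σ]
        by_cases h : σ ℓ = i
        · simp only [h, if_pos]
          rw [show ((∑ ℓ' : Fin k, Fstar ℓ' (σ ℓ')) + t - C σ) / ε
              = ((∑ ℓ' : Fin k, Fstar ℓ' (σ ℓ')) - C σ) / ε + t / ε by ring,
            Real.exp_add, hPstar σ]
        · simp [h, hPstar σ]
      simp_rw [this]
      rw [Finset.sum_ite]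
      have h1 : ∑ σ ∈ Finset.univ.filter (fun σ : Fin k → Fin n => σ ℓ = i),
          Pstar σ * Real.exp (t / ε) = m * Real.exp (t / ε) := by
        rw [hm, marginal, Finset.sum_mul]
      have h2 : ∑ σ ∈ Finset.univ.filter (fun σ : Fin k → Fin n => ¬ σ ℓ = i), Pstar σ
          = S - m := by
        have := Finset.sum_filter_add_sum_filter_not (Finset.univ : Finset (Fin k → Fin n))
          (fun σ => σ ℓ = i) Pstar
        rw [hm, marginal, hS]
        linarith [this]
      rw [h1, h2]
      ring
    have hSexp : ∑ σ : Fin k → Fin n, Real.exp (((∑ ℓ' : Fin k, Fstar ℓ' (σ ℓ')) - C σ) / ε)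
        = S := by
      rw [hS]
      exact Finset.sum_congr rfl fun σ _ => (hPstar σ).symm
    rw [Dobj, Dobj, hlin, hexp, hSexp]
    ring
  set φ : ℝ → ℝ := fun t => t / (n : ℝ) - ε * m * (Real.exp (t / ε) - 1) with hφ
  have hmax : ∀ t, φ t ≤ φ 0 := by
    intro t
    have h1 := hFstar (Function.update Fstar ℓ (Function.update (Fstar ℓ) i (Fstar ℓ i + t)))
    rw [hDG t] at h1
    have h0 : φ 0 = 0 := by simp [hφ]
    rw [h0]
    simp only [hφ]
    linarith
  have hd : HasDerivAt φ (1 / (n : ℝ) - m) 0 := by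
    have h1 : HasDerivAt (fun t : ℝ => t / (n : ℝ)) (1 / (n : ℝ)) 0 := by
      simpa using (hasDerivAt_id (0:ℝ)).div_const (n : ℝ)
    have h2 : HasDerivAt (fun t : ℝ => Real.exp (t / ε)) (1 / ε) 0 := by
      have h0 : HasDerivAt (fun t : ℝ => t / ε) (1 / ε) 0 := by
        simpa using (hasDerivAt_id (0:ℝ)).div_const ε
      have := (Real.hasDerivAt_exp ((0:ℝ) / ε)).comp 0 h0
      simpa [Function.comp_def] using this
    have h3 : HasDerivAt (fun t : ℝ => ε * m * (Real.exp (t / ε) - 1)) (ε * m * (1 / ε)) 0 :=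
      (h2.sub_const 1).const_mul _
    have h4 := h1.sub h3
    have hεm : ε * m * (1 / ε) = m := by field_simp
    rw [hεm] at h4
    exact h4
  have hloc : IsLocalMax φ 0 := Filter.Eventually.of_forall hmax
  have hder0 : deriv φ 0 = 0 := hloc.deriv_eq_zero
  rw [hd.deriv] at hder0
  linarith

theorem sinkhorn_output_formula (n k : ℕ) (hn : 1 ≤ n) (hk : 1 ≤ k) (ε : ℝ) (hε : 0 < ε)
    (C : (Fin k → Fin n) → ℝ) (Fstar : Fin k → Fin n → ℝ)
    (hFstar : ∀ G : Fin k → Fin n → ℝ, Dobj n k ε C G ≤ Dobj n k ε C Fstar)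
    (Pstar : (Fin k → Fin n) → ℝ)
    (hPstar : ∀ σ, Pstar σ = Real.exp (((∑ ℓ : Fin k, Fstar ℓ (σ ℓ)) - C σ) / ε)) :
    OTval n k ε C
      = (1 / (n : ℝ)) * (∑ ℓ : Fin k, ∑ i : Fin n, Fstar ℓ i)
        - ε * ∑ σ : Fin k → Fin n, Pstar σ := by
  -- abbreviation for the exponent
  set a : (Fin k → Fin n) → ℝ := fun σ => ((∑ ℓ : Fin k, Fstar ℓ (σ ℓ)) - C σ) / ε with ha
  -- key identity: for any P with the right marginals
  have hkey : ∀ P : (Fin k → Fin n) → ℝ,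
      (∀ (ℓ : Fin k) (i : Fin n), marginal n k P ℓ i = 1 / (n : ℝ)) →
      hObj n k ε P C = Dobj n k ε C Fstar
        + ε * ∑ σ : Fin k → Fin n,
            (P σ * Real.log (P σ) - P σ * a σ - P σ + Real.exp (a σ)) := by
    intro P hP
    have hmar : (1 / (n : ℝ)) * ∑ ℓ : Fin k, ∑ i : Fin n, Fstar ℓ i
        = ∑ σ : Fin k → Fin n, P σ * (∑ ℓ : Fin k, Fstar ℓ (σ ℓ)) := by
      rw [sum_mul_tensorSum]
      simp_rw [hP]
      rw [Finset.mul_sum]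
      refine Finset.sum_congr rfl fun ℓ _ => ?_
      rw [Finset.mul_sum]
      exact Finset.sum_congr rfl fun i _ => by ring
    rw [hObj, Dobj, hmar]
    simp only [ha]
    rw [Finset.mul_sum, Finset.mul_sum, Finset.mul_sum]
    rw [← Finset.sum_sub_distrib, ← Finset.sum_add_distrib, ← Finset.sum_add_distrib]
    refine Finset.sum_congr rfl fun σ _ => ?_
    have hεne : ε ≠ 0 := hε.ne'
    field_simp
    ring
  -- Pstar is in the polytope
  have hPB : Pstar ∈ Bpoly n k := by
    constructor
    · intro σ; rw [hPstar σ]; positivity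
    · exact marginal_of_maximizer n k ε hε C Fstar hFstar Pstar hPstar
  -- hObj at Pstar equals Dobj at Fstar
  have hPval : hObj n k ε Pstar C = Dobj n k ε C Fstar := by
    rw [hkey Pstar hPB.2]
    have : ∀ σ : Fin k → Fin n,
        Pstar σ * Real.log (Pstar σ) - Pstar σ * a σ - Pstar σ + Real.exp (a σ) = 0 := by
      intro σ
      simp only [ha]
      rw [hPstar σ, Real.log_exp]
      ring
    simp [this]
  -- lower bound
  have hlb : ∀ x ∈ (fun P => hObj n k ε P C) '' Bpoly n k, Dobj n k ε C Fstar ≤ x := by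
    rintro x ⟨P, hP, rfl⟩
    show Dobj n k ε C Fstar ≤ hObj n k ε P C
    rw [hkey P hP.2]
    have : 0 ≤ ∑ σ : Fin k → Fin n,
        (P σ * Real.log (P σ) - P σ * a σ - P σ + Real.exp (a σ)) :=
      Finset.sum_nonneg fun σ _ => pointwise_ineq (P σ) (a σ) (hP.1 σ)
    nlinarith
  have hleast : IsLeast ((fun P => hObj n k ε P C) '' Bpoly n k) (Dobj n k ε C Fstar) :=
    ⟨⟨Pstar, hPB, hPval⟩, hlb⟩
  rw [OTval, hleast.csInf_eq, Dobj]
  have : ∑ σ : Fin k → Fin n, Real.exp (((∑ ℓ : Fin k, Fstar ℓ (σ ℓ)) - C σ) / ε)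
      = ∑ σ : Fin k → Fin n, Pstar σ :=
    Finset.sum_congr rfl fun σ _ => (hPstar σ).symm
  rw [this]
end

section
/- (Correctness of the multi-marginal Sinkhorn block update.) Fix ε > 0, a cost tensor C, potentials F = (f^1, ..., f^k) with f^ℓ ∈ ℝ^n, and an index ℓ ∈ Fin k. Define the updated potential f̂^ℓ ∈ ℝ^n by f̂^ℓ(i) = −ε·( log( Σ over index tuples σ with σ(ℓ) = i of exp((Σ_{m ≠ ℓ} f^m(σ(m)) − C(σ))/ε) ) + log n ). Then the tensor P̂ with entries P̂(σ) = exp(( f̂^ℓ(σ(ℓ)) + Σ_{m ≠ ℓ} f^m(σ(m)) − C(σ) )/ε) satisfies m_ℓ(P̂)(i) = 1/n for every i ∈ Fin n. -/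
open Finset Real

theorem sinkhorn_block_update_marginal (n k : ℕ) (hn : 1 ≤ n) (hk : 1 ≤ k)
    (ε : ℝ) (hε : 0 < ε) (C : (Fin k → Fin n) → ℝ)
    (F : Fin k → Fin n → ℝ) (ℓ : Fin k) (fhat : Fin n → ℝ)
    (hfhat : ∀ i : Fin n, fhat i =
      -ε * (Real.log (∑ σ ∈ Finset.univ.filter (fun σ : Fin k → Fin n => σ ℓ = i),
              Real.exp (((∑ m ∈ Finset.univ.erase ℓ, F m (σ m)) - C σ) / ε))
            + Real.log n))
    (Phat : (Fin k → Fin n) → ℝ)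
    (hPhat : ∀ σ : Fin k → Fin n, Phat σ =
      Real.exp ((fhat (σ ℓ) + (∑ m ∈ Finset.univ.erase ℓ, F m (σ m)) - C σ) / ε)) :
    ∀ i : Fin n, marginal n k Phat ℓ i = 1 / (n : ℝ) := by
  intro i
  set s := Finset.univ.filter (fun σ : Fin k → Fin n => σ ℓ = i) with hs
  set Z : ℝ := ∑ σ ∈ s, Real.exp (((∑ m ∈ Finset.univ.erase ℓ, F m (σ m)) - C σ) / ε) with hZ
  have hsne : s.Nonempty := ⟨fun _ => i, by simp [hs]⟩
  have hZpos : 0 < Z := Finset.sum_pos (fun σ _ => Real.exp_pos _) hsne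
  have hnpos : (0:ℝ) < n := by exact_mod_cast hn
  have hstep : marginal n k Phat ℓ i = Real.exp (fhat i / ε) * Z := by
    rw [marginal, Finset.mul_sum]
    apply Finset.sum_congr rfl
    intro σ hσ
    have hσℓ : σ ℓ = i := by simpa [hs] using hσ
    rw [hPhat σ, hσℓ, ← Real.exp_add]
    ring_nf
  have hexp : Real.exp (fhat i / ε) = 1 / (Z * n) := by
    rw [hfhat i]
    have : -ε * (Real.log Z + Real.log n) / ε = -(Real.log Z + Real.log n) := by
      field_simp
    rw [this, Real.exp_neg, Real.exp_add, Real.exp_log hZpos, Real.exp_log hnpos]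
    rw [one_div]
  rw [hstep, hexp]
  field_simp
end

section
/- (Block-coordinate ascent property of the multi-marginal Sinkhorn update.) Fix ε > 0, a cost tensor C, potentials F = (f^1, ..., f^k), and ℓ ∈ Fin k. The updated potential f̂^ℓ defined by f̂^ℓ(i) = −ε·( log( Σ over σ with σ(ℓ) = i of exp((Σ_{m ≠ ℓ} f^m(σ(m)) − C(σ))/ε) ) + log n ) is the unique maximizer over g ∈ ℝ^n of the dual objective D(f^1, ..., f^{ℓ−1}, g, f^{ℓ+1}, ..., f^k); in particular, replacing f^ℓ by f̂^ℓ does not decrease the dual objective D. -/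
open Finset Real

theorem sinkhorn_block_update_ascent (n k : ℕ) (hn : 1 ≤ n) (hk : 1 ≤ k)
    (ε : ℝ) (hε : 0 < ε) (C : (Fin k → Fin n) → ℝ)
    (F : Fin k → Fin n → ℝ) (ℓ : Fin k) (fhat : Fin n → ℝ)
    (hfhat : ∀ i : Fin n, fhat i =
      -ε * (Real.log (∑ σ ∈ Finset.univ.filter (fun σ : Fin k → Fin n => σ ℓ = i),
              Real.exp (((∑ m ∈ Finset.univ.erase ℓ, F m (σ m)) - C σ) / ε))
            + Real.log n)) :
    (∀ g : Fin n → ℝ,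
        Dobj n k ε C (Function.update F ℓ g) ≤ Dobj n k ε C (Function.update F ℓ fhat)) ∧
    (∀ g : Fin n → ℝ,
        Dobj n k ε C (Function.update F ℓ g) = Dobj n k ε C (Function.update F ℓ fhat)
          → g = fhat) ∧
    Dobj n k ε C F ≤ Dobj n k ε C (Function.update F ℓ fhat) := by
  have hn0 : (0:ℝ) < n := by exact_mod_cast hn
  set S : Fin n → ℝ := fun i => ∑ σ ∈ Finset.univ.filter (fun σ : Fin k → Fin n => σ ℓ = i),
      Real.exp (((∑ m ∈ Finset.univ.erase ℓ, F m (σ m)) - C σ) / ε) with hS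
  have hSpos : ∀ i, 0 < S i := by
    intro i
    apply Finset.sum_pos
    · intro σ _; exact Real.exp_pos _
    · exact ⟨fun _ => i, by simp⟩
  have hexp : ∀ i, Real.exp (fhat i / ε) = 1 / ((n:ℝ) * S i) := by
    intro i
    have h0 : fhat i = -ε * (Real.log (S i) + Real.log (n:ℝ)) := hfhat i
    have h1 : fhat i / ε = -(Real.log ((n:ℝ) * S i)) := by
      rw [h0, Real.log_mul (ne_of_gt hn0) (ne_of_gt (hSpos i))]
      field_simp
      ring
    rw [h1, Real.exp_neg, Real.exp_log (mul_pos hn0 (hSpos i)), one_div]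
  -- decomposition of the objective
  have hdec : ∀ g : Fin n → ℝ, Dobj n k ε C (Function.update F ℓ g)
      = (1/(n:ℝ)) * ∑ m ∈ Finset.univ.erase ℓ, ∑ i, F m i
        + ∑ i, ((1/(n:ℝ)) * g i - ε * (S i * Real.exp (g i / ε))) := by
    intro g
    have hA : ∑ ℓ' : Fin k, ∑ i, Function.update F ℓ g ℓ' i
        = (∑ i, g i) + ∑ m ∈ Finset.univ.erase ℓ, ∑ i, F m i := by
      rw [← Finset.add_sum_erase Finset.univ _ (Finset.mem_univ ℓ)]
      simp only [Function.update_self]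
      congr 1
      exact Finset.sum_congr rfl fun m hm => by
        rw [Function.update_of_ne (Finset.ne_of_mem_erase hm)]
    have hB : ∀ σ : Fin k → Fin n, ∑ ℓ' : Fin k, Function.update F ℓ g ℓ' (σ ℓ')
        = g (σ ℓ) + ∑ m ∈ Finset.univ.erase ℓ, F m (σ m) := by
      intro σ
      rw [← Finset.add_sum_erase Finset.univ _ (Finset.mem_univ ℓ)]
      simp only [Function.update_self]
      congr 1
      exact Finset.sum_congr rfl fun m hm => by
        rw [Function.update_of_ne (Finset.ne_of_mem_erase hm)]
    have hC : ∑ σ : Fin k → Fin n,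
        Real.exp (((∑ ℓ' : Fin k, Function.update F ℓ g ℓ' (σ ℓ')) - C σ) / ε)
        = ∑ i, S i * Real.exp (g i / ε) := by
      rw [← Finset.sum_fiberwise Finset.univ (fun σ : Fin k → Fin n => σ ℓ)
        (fun σ => Real.exp (((∑ ℓ' : Fin k, Function.update F ℓ g ℓ' (σ ℓ')) - C σ) / ε))]
      refine Finset.sum_congr rfl fun i _ => ?_
      rw [hS, Finset.sum_mul]
      refine Finset.sum_congr rfl fun σ hσ => ?_
      have hσℓ : σ ℓ = i := (Finset.mem_filter.mp hσ).2
      rw [hB σ, hσℓ, ← Real.exp_add]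
      congr 1
      ring
    have hobj : Dobj n k ε C (Function.update F ℓ g)
        = (1/(n:ℝ)) * ((∑ i, g i) + ∑ m ∈ Finset.univ.erase ℓ, ∑ i, F m i)
          - ε * ∑ i, S i * Real.exp (g i / ε) := by
      unfold Dobj
      rw [hA, hC]
    rw [hobj, Finset.sum_sub_distrib, ← Finset.mul_sum, ← Finset.mul_sum]
    ring
  -- pointwise inequality
  have key : ∀ (i : Fin n) (t : ℝ), S i * Real.exp (t / ε)
      = (1/(n:ℝ)) * Real.exp ((t - fhat i) / ε) := by
    intro i t
    have ht : t / ε = fhat i / ε + (t - fhat i) / ε := by field_simp; ring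
    rw [ht, Real.exp_add, hexp i]
    field_simp [(hSpos i).ne', hn0.ne']
  have hφconst : ∀ (i : Fin n), (1/(n:ℝ)) * fhat i - ε * (S i * Real.exp (fhat i / ε))
      = (1/(n:ℝ)) * fhat i - ε / (n:ℝ) := by
    intro i
    rw [key i (fhat i)]
    simp only [sub_self, zero_div, Real.exp_zero, mul_one]
    ring
  have hle : ∀ (i : Fin n) (t : ℝ), (1/(n:ℝ)) * t - ε * (S i * Real.exp (t / ε))
      ≤ (1/(n:ℝ)) * fhat i - ε * (S i * Real.exp (fhat i / ε)) := by
    intro i t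
    rw [hφconst i, key i t]
    have hx : (t - fhat i) / ε + 1 ≤ Real.exp ((t - fhat i) / ε) := Real.add_one_le_exp _
    have hpos : 0 < ε / (n:ℝ) := div_pos hε hn0
    have h2 : (ε/(n:ℝ)) * ((t - fhat i)/ε + 1) ≤ (ε/(n:ℝ)) * Real.exp ((t - fhat i)/ε) :=
      mul_le_mul_of_nonneg_left hx hpos.le
    have h3 : (ε/(n:ℝ)) * ((t - fhat i)/ε) = (t - fhat i) / (n:ℝ) := by
      field_simp
    have h4 : ε * ((1/(n:ℝ)) * Real.exp ((t - fhat i)/ε))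
        = (ε/(n:ℝ)) * Real.exp ((t - fhat i)/ε) := by ring
    rw [h4]
    have h5 : (1/(n:ℝ)) * t - (t - fhat i)/(n:ℝ) - ε/(n:ℝ)
        = (1/(n:ℝ)) * fhat i - ε/(n:ℝ) := by field_simp; ring
    nlinarith [h2, h3]
  have hlt : ∀ (i : Fin n) (t : ℝ), t ≠ fhat i →
      (1/(n:ℝ)) * t - ε * (S i * Real.exp (t / ε))
      < (1/(n:ℝ)) * fhat i - ε * (S i * Real.exp (fhat i / ε)) := by
    intro i t hne
    rw [hφconst i, key i t]
    have hx0 : (t - fhat i) / ε ≠ 0 := by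
      intro h
      apply hne
      have := (div_eq_zero_iff.mp h).resolve_right (ne_of_gt hε)
      linarith [sub_eq_zero.mp this]
    have hx : (t - fhat i) / ε + 1 < Real.exp ((t - fhat i) / ε) :=
      Real.add_one_lt_exp hx0
    have hpos : 0 < ε / (n:ℝ) := div_pos hε hn0
    have h2 : (ε/(n:ℝ)) * ((t - fhat i)/ε + 1) < (ε/(n:ℝ)) * Real.exp ((t - fhat i)/ε) :=
      (mul_lt_mul_iff_right₀ hpos).mpr hx
    have h3 : (ε/(n:ℝ)) * ((t - fhat i)/ε) = (t - fhat i) / (n:ℝ) := by field_simp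
    have h4 : ε * ((1/(n:ℝ)) * Real.exp ((t - fhat i)/ε))
        = (ε/(n:ℝ)) * Real.exp ((t - fhat i)/ε) := by ring
    rw [h4]
    have h5 : (1/(n:ℝ)) * t - (t - fhat i)/(n:ℝ) - ε/(n:ℝ)
        = (1/(n:ℝ)) * fhat i - ε/(n:ℝ) := by field_simp; ring
    nlinarith [h2, h3]
  have main : ∀ g : Fin n → ℝ,
      Dobj n k ε C (Function.update F ℓ g) ≤ Dobj n k ε C (Function.update F ℓ fhat) := by
    intro g
    rw [hdec g, hdec fhat]
    refine add_le_add le_rfl (Finset.sum_le_sum fun i _ => hle i (g i))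
  refine ⟨main, ?_, ?_⟩
  · intro g hg
    rw [hdec g, hdec fhat] at hg
    have hsum : ∑ i, ((1/(n:ℝ)) * g i - ε * (S i * Real.exp (g i / ε)))
        = ∑ i, ((1/(n:ℝ)) * fhat i - ε * (S i * Real.exp (fhat i / ε))) :=
      add_left_cancel hg
    funext i
    by_contra hne
    have heach := (Finset.sum_eq_sum_iff_of_le (fun i _ => hle i (g i))).mp hsum i
      (Finset.mem_univ i)
    exact (hlt i (g i) hne).ne heach
  · simpa [Function.update_eq_self] using main (F ℓ)
end
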